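/- Let d ≥ 2, m, n_1,…,n_d be positive integers, r = (r_1,…,r_d) a tuple of positive integers, and a ∈ (0,1). Let A : ℝ^{n_1×⋯×n_d} → ℝ^m be a linear map satisfying the HOSVD-TRIP at rank 3r = (3r_1,…,3r_d) with constant δ ≤ a/4, and set ε = a²/(17·(1+√(1+δ)·‖A‖_{2→2})²) and b = 2√(1+δ) + √(4ε+2ε²)·‖A‖_{2→2}. Let X and X' be tensors of HOSVD-rank at most r, let e ∈ ℝ^m, and set Y = X' + A*(A(X) + e − A(X')). If X'' is a tensor of HOSVD-rank at most r satisfying ‖Y − X''‖_F ≤ (1+ε)·‖Y − X‖_F, then ‖X'' − X‖_F ≤ a·‖X' − X‖_F + b·‖e‖_2. -/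

import Mathlib

/-!
Write `u = X' - X` and `v = X'' - X`, so that `Y - X = u + A* (e - A u)`. Squaring the
quasi-optimality of `X''` gives `‖v‖² ≤ 2 ⟪Y - X, v⟫ + (2ε + ε²) ‖Y - X‖²`. Every linear
combination of `u` and `v` has HOSVD-rank at most `3r`, so the TRIP bounds `⟪u, v⟫ - ⟪A u, A v⟫`
by `δ ‖u‖ ‖v‖` (polarization) and `‖A v‖` by `√(1 + δ) ‖v‖`; hence
`⟪Y - X, v⟫ ≤ (δ ‖u‖ + √(1 + δ) ‖e‖) ‖v‖`, while `‖Y - X‖ ≤ (1 + √(1 + δ) ‖A‖) ‖u‖ + ‖A‖ ‖e‖`.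
Solving this quadratic inequality in `‖v‖` leaves the factor `2δ + √(2ε + ε²) (1 + √(1 + δ) ‖A‖)`
in front of `‖u‖`, and the choice of `ε` makes it at most `a`.
-/

open scoped BigOperators

noncomputable section

/-- The mode-`k` unfolding of an order-`d` tensor, with columns indexed (redundantly)
by full multi-indices: entry `(a, j)` is `X` evaluated at `j` with its `k`-th index
replaced by `a`.  Its rank coincides with the rank of the usual mode-`k` unfolding. -/
def unfold {d : ℕ} (n : Fin d → ℕ) (k : Fin d) (X : (∀ i, Fin (n i)) → ℝ) :
    Matrix (Fin (n k)) (∀ i, Fin (n i)) ℝ :=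
  Matrix.of fun a j => X (Function.update j k a)

/-- `X` has HOSVD-rank at most `r`: every mode-`k` unfolding has matrix rank at most `r k`. -/
def hosvdRankLE {d : ℕ} (n r : Fin d → ℕ) (X : EuclideanSpace ℝ (∀ i, Fin (n i))) : Prop :=
  ∀ k, (unfold n k (fun j => X j)).rank ≤ r k

open scoped InnerProduct InnerProductSpace

namespace Matrix

variable {K m n : Type*} [Field K]

theorem rank_add_le [Fintype n] (M N : Matrix m n K) : (M + N).rank ≤ M.rank + N.rank := by
  rw [rank, rank, rank, mulVecLin_add]
  refine (Submodule.finrank_mono ?_).trans (Submodule.finrank_add_le_finrank_add_finrank _ _)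
  rintro _ ⟨x, rfl⟩
  exact Submodule.add_mem_sup ⟨x, rfl⟩ ⟨x, rfl⟩

theorem rank_smul_le [Fintype m] [Fintype n] (c : K) (M : Matrix m n K) :
    (c • M).rank ≤ M.rank := by
  classical
  rw [smul_eq_diagonal_mul]
  exact rank_mul_le_right _ _

end Matrix

section HOSVDRank

variable {d : ℕ} {n r s : Fin d → ℕ} {X Z : EuclideanSpace ℝ (∀ i, Fin (n i))}

theorem unfold_add (k : Fin d) :
    unfold n k (fun j => (X + Z) j) = unfold n k (fun j => X j) + unfold n k (fun j => Z j) :=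
  rfl

theorem unfold_smul (k : Fin d) (c : ℝ) :
    unfold n k (fun j => (c • X) j) = c • unfold n k (fun j => X j) :=
  rfl

theorem hosvdRankLE.mono (hX : hosvdRankLE n r X) (hrs : ∀ k, r k ≤ s k) :
    hosvdRankLE n s X :=
  fun k => (hX k).trans (hrs k)

theorem hosvdRankLE.add (hX : hosvdRankLE n r X) (hZ : hosvdRankLE n s Z) :
    hosvdRankLE n (fun k => r k + s k) (X + Z) := fun k => by
  rw [unfold_add]
  exact (Matrix.rank_add_le _ _).trans (add_le_add (hX k) (hZ k))

theorem hosvdRankLE.smul (c : ℝ) (hX : hosvdRankLE n r X) :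
    hosvdRankLE n r (c • X) := fun k => by
  rw [unfold_smul]
  exact (Matrix.rank_smul_le _ _).trans (hX k)

theorem hosvdRankLE_smul_sub_add_smul_sub {X' X'' : EuclideanSpace ℝ (∀ i, Fin (n i))}
    (hX : hosvdRankLE n r X) (hX' : hosvdRankLE n r X') (hX'' : hosvdRankLE n r X'') (α β : ℝ) :
    hosvdRankLE n (fun k => 3 * r k) (α • (X' - X) + β • (X'' - X)) := by
  have hcomb : α • (X' - X) + β • (X'' - X) = α • X' + β • X'' + (-(α + β)) • X := by module
  rw [hcomb]
  exact (((hX'.smul α).add (hX''.smul β)).add (hX.smul _)).mono fun k => by omega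

end HOSVDRank

section RestrictedIsometry

variable {E F : Type*} [NormedAddCommGroup E] [InnerProductSpace ℝ E]
  [NormedAddCommGroup F] [InnerProductSpace ℝ F]

def RestrictedIsometryOn (A : E →L[ℝ] F) (S : Set E) (δ : ℝ) : Prop :=
  ∀ z ∈ S, (1 - δ) * ‖z‖ ^ 2 ≤ ‖A z‖ ^ 2 ∧ ‖A z‖ ^ 2 ≤ (1 + δ) * ‖z‖ ^ 2

theorem norm_smul_add_smul_sq (α β : ℝ) (u v : E) :
    ‖α • u + β • v‖ ^ 2 = α ^ 2 * ‖u‖ ^ 2 + 2 * (α * β) * ⟪u, v⟫_ℝ + β ^ 2 * ‖v‖ ^ 2 := by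
  rw [norm_add_sq_real, norm_smul, norm_smul, real_inner_smul_left, real_inner_smul_right,
    mul_pow, mul_pow, Real.norm_eq_abs, Real.norm_eq_abs, sq_abs, sq_abs]
  ring

namespace RestrictedIsometryOn

variable {A : E →L[ℝ] F} {S : Set E} {δ : ℝ} {z : E}

theorem norm_apply_le (hA : RestrictedIsometryOn A S δ) (hz : z ∈ S) :
    ‖A z‖ ≤ √(1 + δ) * ‖z‖ := by
  rw [← Real.sqrt_sq (norm_nonneg (A z)), ← Real.sqrt_sq (norm_nonneg z), ← Real.sqrt_mul' _
    (sq_nonneg _)]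
  exact Real.sqrt_le_sqrt (hA z hz).2

/-- Polarization with the test vectors `‖v‖ • u ± ‖u‖ • v`, whose norms are balanced. -/
theorem inner_sub_inner_apply_le (hA : RestrictedIsometryOn A S δ) {u v : E}
    (huv : ∀ α β : ℝ, α • u + β • v ∈ S) :
    ⟪u, v⟫_ℝ - ⟪A u, A v⟫_ℝ ≤ δ * (‖u‖ * ‖v‖) := by
  have hApply : ∀ α β : ℝ, ‖A (α • u + β • v)‖ ^ 2
      = α ^ 2 * ‖A u‖ ^ 2 + 2 * (α * β) * ⟪A u, A v⟫_ℝ + β ^ 2 * ‖A v‖ ^ 2 := fun α β => by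
    rw [map_add, map_smul, map_smul, norm_smul_add_smul_sq]
  have hsum := (hA _ (huv ‖v‖ ‖u‖)).1
  have hdiff := (hA _ (huv ‖v‖ (-‖u‖))).2
  rw [hApply, norm_smul_add_smul_sq] at hsum hdiff
  have key : ‖u‖ * ‖v‖ * (⟪u, v⟫_ℝ - ⟪A u, A v⟫_ℝ) ≤ ‖u‖ * ‖v‖ * (δ * (‖u‖ * ‖v‖)) := by
    linarith
  rcases (mul_nonneg (norm_nonneg u) (norm_nonneg v)).eq_or_lt with h0 | hpos
  · rcases mul_eq_zero.mp h0.symm with hu | hv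
    · simp [norm_eq_zero.mp hu]
    · simp [norm_eq_zero.mp hv]
  · exact le_of_mul_le_mul_left key hpos

end RestrictedIsometryOn

theorem norm_sq_le_of_norm_sub_le {ε : ℝ} {w v : E}
    (h : ‖w - v‖ ≤ (1 + ε) * ‖w‖) :
    ‖v‖ ^ 2 ≤ 2 * ⟪w, v⟫_ℝ + (2 * ε + ε ^ 2) * ‖w‖ ^ 2 := by
  have hsq := pow_le_pow_left₀ (norm_nonneg _) h 2
  rw [norm_sub_sq_real] at hsq
  linarith

variable [CompleteSpace E] [CompleteSpace F]

theorem inner_add_adjoint_sub_apply (A : E →L[ℝ] F) (u v : E) (e : F) :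
    ⟪u + (A†) (e - A u), v⟫_ℝ = ⟪u, v⟫_ℝ - ⟪A u, A v⟫_ℝ + ⟪e, A v⟫_ℝ := by
  rw [inner_add_left, ContinuousLinearMap.adjoint_inner_left, inner_sub_left]
  ring

theorem norm_add_adjoint_sub_apply_le (A : E →L[ℝ] F) {K : ℝ} {u : E}
    (hu : ‖A u‖ ≤ K * ‖u‖) (e : F) :
    ‖u + (A†) (e - A u)‖ ≤ (1 + K * ‖A‖) * ‖u‖ + ‖A‖ * ‖e‖ := by
  have hadj : ‖(A†) (e - A u)‖ ≤ ‖A‖ * (‖e‖ + K * ‖u‖) := by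
    calc ‖(A†) (e - A u)‖ ≤ ‖A†‖ * ‖e - A u‖ := ContinuousLinearMap.le_opNorm _ _
      _ ≤ ‖A‖ * (‖e‖ + K * ‖u‖) := by
        rw [LinearIsometryEquiv.norm_map]
        gcongr
        exact (norm_sub_le _ _).trans (by gcongr)
  linarith [norm_add_le u ((A†) (e - A u))]

end RestrictedIsometry

theorem le_add_of_sq_le_mul_add_sq {t p s : ℝ} (hp : 0 ≤ p) (hs : 0 ≤ s)
    (h : t ^ 2 ≤ p * t + s ^ 2) : t ≤ p + s := by
  nlinarith [sq_nonneg (t - s), mul_nonneg hp hs]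

section GradientStep

variable {E F : Type*} [NormedAddCommGroup E] [InnerProductSpace ℝ E] [CompleteSpace E]
  [NormedAddCommGroup F] [InnerProductSpace ℝ F] [CompleteSpace F]

theorem norm_le_of_restrictedIsometryOn_of_norm_sub_le {A : E →L[ℝ] F} {S : Set E} {δ ε : ℝ}
    (hδ : 0 ≤ δ) (hε : 0 ≤ ε) (hA : RestrictedIsometryOn A S δ) {u v : E}
    (huv : ∀ α β : ℝ, α • u + β • v ∈ S) (e : F)
    (hthr : ‖u + (A†) (e - A u) - v‖ ≤ (1 + ε) * ‖u + (A†) (e - A u)‖) :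
    ‖v‖ ≤ 2 * (δ * ‖u‖ + √(1 + δ) * ‖e‖)
      + √(2 * ε + ε ^ 2) * ((1 + √(1 + δ) * ‖A‖) * ‖u‖ + ‖A‖ * ‖e‖) := by
  have hAu : ‖A u‖ ≤ √(1 + δ) * ‖u‖ := hA.norm_apply_le (by simpa using huv 1 0)
  have hAv : ‖A v‖ ≤ √(1 + δ) * ‖v‖ := hA.norm_apply_le (by simpa using huv 0 1)
  have hinner : ⟪u + (A†) (e - A u), v⟫_ℝ ≤ (δ * ‖u‖ + √(1 + δ) * ‖e‖) * ‖v‖ := by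
    have hdist := hA.inner_sub_inner_apply_le huv
    have hnoise : ⟪e, A v⟫_ℝ ≤ ‖e‖ * (√(1 + δ) * ‖v‖) :=
      (real_inner_le_norm _ _).trans (by gcongr)
    rw [inner_add_adjoint_sub_apply]
    linarith
  have hnorm := norm_add_adjoint_sub_apply_le A hAu e
  have hsq := norm_sq_le_of_norm_sub_le hthr
  refine le_add_of_sq_le_mul_add_sq (by positivity) (by positivity) ?_
  rw [mul_pow, Real.sq_sqrt (by positivity)]
  calc ‖v‖ ^ 2 ≤ 2 * ⟪u + (A†) (e - A u), v⟫_ℝ + (2 * ε + ε ^ 2) * ‖u + (A†) (e - A u)‖ ^ 2 :=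
        hsq
    _ ≤ 2 * (δ * ‖u‖ + √(1 + δ) * ‖e‖) * ‖v‖
        + (2 * ε + ε ^ 2) * ((1 + √(1 + δ) * ‖A‖) * ‖u‖ + ‖A‖ * ‖e‖) ^ 2 := by
      have hsq_norm := pow_le_pow_left₀ (norm_nonneg _) hnorm 2
      exact add_le_add (by linarith) (mul_le_mul_of_nonneg_left hsq_norm (by positivity))

end GradientStep

theorem sqrt_two_mul_add_sq_mul_le_half {a c ε : ℝ} (ha : 0 ≤ a) (ha1 : a ≤ 1) (hc : 1 ≤ c)
    (hε : ε = a ^ 2 / (17 * c ^ 2)) :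
    √(2 * ε + ε ^ 2) * c ≤ a / 2 := by
  have hεc : ε * c ^ 2 = a ^ 2 / 17 := by
    rw [hε]
    field_simp
  have hε0 : 0 ≤ ε := hε ▸ by positivity
  have hε1 : ε ≤ 1 / 17 := by
    have := le_mul_of_one_le_right hε0 (one_le_pow₀ hc : 1 ≤ c ^ 2)
    have := pow_le_one₀ ha ha1 (n := 2)
    linarith
  have hsq : (2 * ε + ε ^ 2) * c ^ 2 ≤ (a / 2) ^ 2 := by nlinarith
  rw [← Real.sqrt_sq (by linarith : 0 ≤ c), ← Real.sqrt_mul (by positivity),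
    ← Real.sqrt_sq (by positivity : 0 ≤ a / 2)]
  exact Real.sqrt_le_sqrt hsq

theorem classical_TIHT_one_step_general
    (d m : ℕ) (n r : Fin d → ℕ)
    (a : ℝ) (ha : a ∈ Set.Ioo (0 : ℝ) 1)
    (A : EuclideanSpace ℝ (∀ i, Fin (n i)) →L[ℝ] EuclideanSpace ℝ (Fin m))
    (δ : ℝ) (hδ0 : 0 ≤ δ) (hδa : δ ≤ a / 4)
    (hTRIP : ∀ Z : EuclideanSpace ℝ (∀ i, Fin (n i)),
      hosvdRankLE n (fun k => 3 * r k) Z →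
        (1 - δ) * ‖Z‖ ^ 2 ≤ ‖A Z‖ ^ 2 ∧ ‖A Z‖ ^ 2 ≤ (1 + δ) * ‖Z‖ ^ 2)
    (ε b : ℝ)
    (hε : ε = a ^ 2 / (17 * (1 + Real.sqrt (1 + δ) * ‖A‖) ^ 2))
    (hb : b = 2 * Real.sqrt (1 + δ) + Real.sqrt (4 * ε + 2 * ε ^ 2) * ‖A‖)
    (X X' : EuclideanSpace ℝ (∀ i, Fin (n i)))
    (hX : hosvdRankLE n r X) (hX' : hosvdRankLE n r X')
    (e : EuclideanSpace ℝ (Fin m))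
    (Y : EuclideanSpace ℝ (∀ i, Fin (n i)))
    (hY : Y = X' + (ContinuousLinearMap.adjoint A) (A X + e - A X'))
    (X'' : EuclideanSpace ℝ (∀ i, Fin (n i))) (hX'' : hosvdRankLE n r X'')
    (hthr : ‖Y - X''‖ ≤ (1 + ε) * ‖Y - X‖) :
    ‖X'' - X‖ ≤ a * ‖X' - X‖ + b * ‖e‖ := by
  obtain ⟨ha0, ha1⟩ := ha
  have hc : 1 ≤ 1 + √(1 + δ) * ‖A‖ := le_add_of_nonneg_right (by positivity)
  have hε0 : 0 ≤ ε := hε ▸ by positivity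
  have hgrad : Y - X = (X' - X) + (A†) (e - A (X' - X)) := by
    simp only [hY, map_sub, map_add]
    abel
  have hstep := norm_le_of_restrictedIsometryOn_of_norm_sub_le hδ0 hε0
    (S := {Z | hosvdRankLE n (fun k => 3 * r k) Z}) hTRIP
    (hosvdRankLE_smul_sub_add_smul_sub hX hX' hX'') e
    (by rwa [← hgrad, sub_sub_sub_cancel_right])
  have hηc := sqrt_two_mul_add_sq_mul_le_half ha0.le ha1.le hc hε
  have hη : √(2 * ε + ε ^ 2) ≤ √(4 * ε + 2 * ε ^ 2) := Real.sqrt_le_sqrt (by nlinarith)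
  calc ‖X'' - X‖ ≤ _ := hstep
    _ = (2 * δ + √(2 * ε + ε ^ 2) * (1 + √(1 + δ) * ‖A‖)) * ‖X' - X‖
        + (2 * √(1 + δ) + √(2 * ε + ε ^ 2) * ‖A‖) * ‖e‖ := by ring
    _ ≤ a * ‖X' - X‖ + b * ‖e‖ := by
      rw [hb]
      gcongr
      linarith

theorem classical_TIHT_one_step
    (d m : ℕ) (hd : 2 ≤ d) (hm : 0 < m) (n r : Fin d → ℕ)
    (hn : ∀ i, 0 < n i) (hr : ∀ i, 0 < r i)
    (a : ℝ) (ha : a ∈ Set.Ioo (0 : ℝ) 1)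
    (A : EuclideanSpace ℝ (∀ i, Fin (n i)) →L[ℝ] EuclideanSpace ℝ (Fin m))
    (δ : ℝ) (hδ0 : 0 ≤ δ) (hδa : δ ≤ a / 4)
    (hTRIP : ∀ Z : EuclideanSpace ℝ (∀ i, Fin (n i)),
      hosvdRankLE n (fun k => 3 * r k) Z →
        (1 - δ) * ‖Z‖ ^ 2 ≤ ‖A Z‖ ^ 2 ∧ ‖A Z‖ ^ 2 ≤ (1 + δ) * ‖Z‖ ^ 2)
    (ε b : ℝ)
    (hε : ε = a ^ 2 / (17 * (1 + Real.sqrt (1 + δ) * ‖A‖) ^ 2))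
    (hb : b = 2 * Real.sqrt (1 + δ) + Real.sqrt (4 * ε + 2 * ε ^ 2) * ‖A‖)
    (X X' : EuclideanSpace ℝ (∀ i, Fin (n i)))
    (hX : hosvdRankLE n r X) (hX' : hosvdRankLE n r X')
    (e : EuclideanSpace ℝ (Fin m))
    (Y : EuclideanSpace ℝ (∀ i, Fin (n i)))
    (hY : Y = X' + (ContinuousLinearMap.adjoint A) (A X + e - A X'))
    (X'' : EuclideanSpace ℝ (∀ i, Fin (n i))) (hX'' : hosvdRankLE n r X'')
    (hthr : ‖Y - X''‖ ≤ (1 + ε) * ‖Y - X‖) :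
    ‖X'' - X‖ ≤ a * ‖X' - X‖ + b * ‖e‖ :=
  classical_TIHT_one_step_general d m n r a ha A δ hδ0 hδa hTRIP ε b hε hb X X' hX hX' e Y hY X''
    hX'' hthr
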